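/- arXiv:1610.09151 — 3 statements merged into one kernel-verified Lean document; each statement's English description precedes it below -/
import Mathlib

section
/- Let X be a Banach space and f : [0,1] → X be strongly measurable. Then for every ε > 0 there exists a countable measurable partition (A_h) of [0,1] such that f restricted to each A_h is Bochner integrable, and for every countable measurable partition (A'_k) refining (A_h) and any choice of points t_k ∈ A'_k, we have ∑_k ‖f(t_k)·λ(A'_k) − ∫_{A'_k} f dλ‖ ≤ ε. -/
/-!
Off a null set, `f` agrees with a strongly measurable function, whose range is separable. Covering
that range by countably many balls of radius `ε / 2` and adding the null set as one more piece gives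
a partition on whose non-null pieces `f` oscillates by at most `ε`. On a piece `A'` of a refinement,
`λ(A') • f t - ∫_{A'} f = ∫_{A'} (f t - f)` then has norm at most `ε λ(A')` (and vanishes if
`λ(A') = 0`), and these bounds add up to `ε λ([0,1]) = ε`.
-/

open MeasureTheory Set Filter
open scoped Topology ENNReal

noncomputable section

/-- A countable measurable partition of `[0,1]`. -/
def IsCountablePartition (A : ℕ → Set ℝ) : Prop :=
  (∀ n, MeasurableSet (A n)) ∧ Pairwise (Function.onFun Disjoint A) ∧
    (⋃ n, A n) = Set.Icc (0:ℝ) 1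

/-- `A'` refines `A`: every member of `A'` is contained in some member of `A`. -/
def Refines (A' A : ℕ → Set ℝ) : Prop := ∀ k, ∃ h, A' k ⊆ A h

namespace MeasureTheory

open Function

variable {α X : Type*} [MeasurableSpace α]

theorem StronglyMeasurable.exists_partition_dist_lt [PseudoMetricSpace X] {g : α → X}
    (hg : StronglyMeasurable g) {δ : ℝ} (hδ : 0 < δ) :
    ∃ B : ℕ → Set α, (∀ i, MeasurableSet (B i)) ∧ Pairwise (Disjoint on B) ∧
      (⋃ i, B i) = univ ∧ ∀ i, ∀ y ∈ B i, ∀ z ∈ B i, dist (g y) (g z) < δ := by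
  rcases isEmpty_or_nonempty α with _ | ⟨⟨a⟩⟩
  · exact ⟨fun _ ↦ ∅, fun _ ↦ .empty, fun _ _ _ ↦ disjoint_bot_left, by simp [eq_empty_of_isEmpty],
      by simp⟩
  obtain ⟨c, hc, hgc⟩ := hg.isSeparable_range
  obtain ⟨x, hx⟩ := (hc.insert (g a)).exists_eq_range (insert_nonempty _ _)
  set U : ℕ → Set α := fun i ↦ {y | dist (g y) (x i) < δ / 2}
  have hU : ∀ i, MeasurableSet (U i) := fun i ↦
    measurableSet_lt (hg.dist stronglyMeasurable_const) stronglyMeasurable_const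
  refine ⟨disjointed U, .disjointed hU, disjoint_disjointed U, ?_, fun i y hy z hz ↦ ?_⟩
  · refine iUnion_disjointed.trans (eq_univ_of_forall fun y ↦ ?_)
    have hy : g y ∈ closure (range x) :=
      closure_mono (hx ▸ subset_insert _ _) (hgc (mem_range_self y))
    obtain ⟨_, ⟨i, rfl⟩, hi⟩ := Metric.mem_closure_iff.1 hy (δ / 2) (half_pos hδ)
    exact mem_iUnion.2 ⟨i, by simpa [U, dist_comm] using hi⟩
  · calc dist (g y) (g z) ≤ dist (g y) (x i) + dist (g z) (x i) := dist_triangle_right _ _ _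
      _ < δ / 2 + δ / 2 := add_lt_add (disjointed_subset U i hy) (disjointed_subset U i hz)
      _ = δ := add_halves δ

def IsNullOrOscillationLE [PseudoMetricSpace X] (μ : Measure α) (f : α → X) (η : ℝ)
    (s : Set α) : Prop :=
  μ s = 0 ∨ ∀ y ∈ s, ∀ z ∈ s, dist (f y) (f z) ≤ η

namespace IsNullOrOscillationLE

variable {μ : Measure α} {f : α → X} {η : ℝ} {s t : Set α}

theorem mono [PseudoMetricSpace X] (h : IsNullOrOscillationLE μ f η s) (hts : t ⊆ s) :
    IsNullOrOscillationLE μ f η t :=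
  h.imp (measure_mono_null hts) fun h y hy z hz ↦ h y (hts hy) z (hts hz)

variable [NormedAddCommGroup X]

theorem integrableOn (h : IsNullOrOscillationLE μ f η s) (hs : MeasurableSet s) (hμs : μ s ≠ ∞)
    (hf : AEStronglyMeasurable f (μ.restrict s)) : IntegrableOn f s μ := by
  rcases h with hnull | hosc
  · exact .of_measure_zero hnull
  rcases s.eq_empty_or_nonempty with rfl | ⟨a, ha⟩
  · exact integrableOn_empty
  refine ⟨hf, .restrict_of_bounded (C := ‖f a‖ + η) hμs.lt_top (ae_restrict_of_forall_mem hs ?_)⟩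
  intro y hy
  calc ‖f y‖ ≤ ‖f a‖ + ‖f y - f a‖ := norm_le_norm_add_norm_sub' _ _
    _ ≤ ‖f a‖ + η := by grw [← dist_eq_norm, hosc y hy a ha]

variable [NormedSpace ℝ X] [CompleteSpace X]

theorem norm_measureReal_smul_sub_setIntegral_le (h : IsNullOrOscillationLE μ f η s) {a : α}
    (hμs : μ s < ∞) (hf : IntegrableOn f s μ) (ha : a ∈ s) :
    ‖μ.real s • f a - ∫ y in s, f y ∂μ‖ ≤ η * μ.real s := by
  rcases h with hnull | hosc
  · simp [Measure.real, hnull, Measure.restrict_eq_zero.2 hnull]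
  rw [← setIntegral_const, ← integral_sub (integrableOn_const (C := f a) hμs.ne) hf]
  refine norm_setIntegral_le_of_norm_le_const_ae' hμs (ae_of_all _ fun y hy ↦ ?_)
  rw [← dist_eq_norm]
  exact hosc a ha y hy

end IsNullOrOscillationLE

theorem tsum_norm_measureReal_smul_sub_setIntegral_le {ι : Type*} [Countable ι]
    [NormedAddCommGroup X] [NormedSpace ℝ X] [CompleteSpace X] {μ : Measure α} {f : α → X}
    {η : ℝ} {A : ι → Set α} (hA : ∀ k, MeasurableSet (A k)) (hAd : Pairwise (Disjoint on A))
    (hμA : μ (⋃ k, A k) < ∞) (hf : ∀ k, IntegrableOn f (A k) μ)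
    (hosc : ∀ k, IsNullOrOscillationLE μ f η (A k)) {t : ι → α} (ht : ∀ k, t k ∈ A k) :
    ∑' k, ‖μ.real (A k) • f (t k) - ∫ y in A k, f y ∂μ‖ ≤ η * μ.real (⋃ k, A k) := by
  have hsum : ∑' k, μ (A k) = μ (⋃ k, A k) := (measure_iUnion hAd hA).symm
  have hfin : ∀ k, μ (A k) < ∞ := fun k ↦ (measure_mono (subset_iUnion A k)).trans_lt hμA
  have hreal : HasSum (fun k ↦ μ.real (A k)) (μ.real (⋃ k, A k)) := by
    rw [measureReal_def, ← hsum, ENNReal.tsum_toReal_eq fun k ↦ (hfin k).ne]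
    exact (ENNReal.summable_toReal (hsum ▸ hμA.ne)).hasSum
  have hterm : ∀ k, ‖μ.real (A k) • f (t k) - ∫ y in A k, f y ∂μ‖ ≤ η * μ.real (A k) :=
    fun k ↦ (hosc k).norm_measureReal_smul_sub_setIntegral_le (hfin k) (hf k) (ht k)
  exact hasSum_le hterm
    ((hreal.mul_left η).summable.of_nonneg_of_le (fun _ ↦ norm_nonneg _) hterm).hasSum
    (hreal.mul_left η)

theorem AEStronglyMeasurable.exists_partition_isNullOrOscillationLE [PseudoMetricSpace X]
    {μ : Measure α} {f : α → X} {s : Set α} (hs : MeasurableSet s)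
    (hf : AEStronglyMeasurable f (μ.restrict s)) {η : ℝ} (hη : 0 < η) :
    ∃ A : ℕ → Set α, (∀ n, MeasurableSet (A n)) ∧ Pairwise (Disjoint on A) ∧
      (⋃ n, A n) = s ∧ ∀ n, IsNullOrOscillationLE μ f η (A n) := by
  obtain ⟨B, hB, hBd, hBunion, hBosc⟩ := hf.stronglyMeasurable_mk.exists_partition_dist_lt hη
  obtain ⟨N, hfN, hN, hNnull⟩ := exists_measurable_superset_of_null (ae_iff.1 hf.ae_eq_mk)
  rw [Measure.restrict_apply hN] at hNnull
  have hf_eq : ∀ y ∉ N, f y = hf.mk f y := fun y hy ↦ not_not.1 (mt (@hfN y) hy)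
  let A : ℕ → Set α := fun n ↦ Nat.casesOn n (N ∩ s) fun i ↦ B i ∩ (s \ N)
  have hA0 : ∀ i, Disjoint (A 0) (A (i + 1)) :=
    fun i ↦ disjoint_left.2 fun y hy hy' ↦ hy'.2.2 hy.1
  refine ⟨A, ?_, ?_, ?_, ?_⟩
  · rintro (_ | i)
    exacts [hN.inter hs, (hB i).inter (hs.diff hN)]
  · rintro (_ | m) (_ | n) hmn
    · exact absurd rfl hmn
    · exact hA0 n
    · exact (hA0 m).symm
    · exact (hBd fun h ↦ hmn (congrArg _ h)).mono inter_subset_left inter_subset_left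
  · rw [← union_iUnion_nat_succ]
    change N ∩ s ∪ ⋃ i, B i ∩ (s \ N) = s
    rw [← iUnion_inter, hBunion, univ_inter, inter_comm, inter_union_sdiff]
  · rintro (_ | i)
    · exact .inl hNnull
    · refine .inr fun y hy z hz ↦ ?_
      rw [hf_eq y hy.2.2, hf_eq z hz.2.2]
      exact (hBosc i y hy.1 z hz.1).le

end MeasureTheory

theorem stmt0 {X : Type*} [NormedAddCommGroup X] [NormedSpace ℝ X] [CompleteSpace X]
    (f : ℝ → X)
    (hf : AEStronglyMeasurable f (volume.restrict (Set.Icc (0:ℝ) 1))) :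
    ∀ ε > (0:ℝ), ∃ A : ℕ → Set ℝ, IsCountablePartition A ∧
      (∀ h, IntegrableOn f (A h) volume) ∧
      ∀ A' : ℕ → Set ℝ, IsCountablePartition A' → Refines A' A →
        ∀ t : ℕ → ℝ, (∀ k, t k ∈ A' k) →
          ∑' k, ‖(volume (A' k)).toReal • f (t k) - ∫ x in A' k, f x‖ ≤ ε := by
  intro ε hε
  obtain ⟨A, hA, hAd, hAunion, hosc⟩ :=
    hf.exists_partition_isNullOrOscillationLE measurableSet_Icc hε
  have hA_sub : ∀ h, A h ⊆ Icc 0 1 := fun h ↦ hAunion ▸ subset_iUnion A h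
  have hint : ∀ h, IntegrableOn f (A h) volume := fun h ↦
    (hosc h).integrableOn (hA h) ((measure_mono (hA_sub h)).trans_lt measure_Icc_lt_top).ne
      (hf.mono_set (hA_sub h))
  refine ⟨A, ⟨hA, hAd, hAunion⟩, hint, fun A' ⟨hA', hA'd, hA'union⟩ href t ht ↦ ?_⟩
  choose φ hφ using href
  have hbound := tsum_norm_measureReal_smul_sub_setIntegral_le hA' hA'd
    (hA'union ▸ measure_Icc_lt_top) (fun k ↦ (hint (φ k)).mono_set (hφ k))
    (fun k ↦ (hosc (φ k)).mono (hφ k)) ht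
  rwa [hA'union, Real.volume_real_Icc_of_le zero_le_one, sub_zero, mul_one] at hbound
end
end

section
/- With f : [0,1] → c₀ as above, the set { F(I) : I a subinterval of [0,1] } of values of the primitive F(I) = ( λ(I ∩ J_{2n−1})/(2|J_{2n−1}|) − λ(I ∩ J_{2n})/(2|J_{2n}|) )_n is not relatively norm compact in c₀; in particular, taking I = [0, b_{2n−1}] for each n yields a sequence in this set with no norm-convergent subsequence. -/
open MeasureTheory Set Filter
open scoped Topology ENNReal ZeroAtInfty

noncomputable section

/-!
The value `F 0 (b (2m))` is `1/2` in coordinate `m` and `0` elsewhere: the intervals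
`J_{2n}, J_{2n+1}` with `n < m` lie inside `[0, b (2m)]` and their contributions `1/2 - 1/2`
cancel, `J_{2m}` lies inside while `J_{2m+1}` is disjoint from it, and all later intervals are
disjoint from it. These values are pairwise at distance `≥ 1/2` in `C₀(ℕ, ℝ)`, so no subsequence
is Cauchy and the set of values of the primitive has no compact closure.
-/

section Separated

variable {X : Type*} [PseudoMetricSpace X] {x : ℕ → X} {ε : ℝ}

theorem not_cauchySeq_of_le_dist (hε : 0 < ε) (hx : ∀ m k, m ≠ k → ε ≤ dist (x m) (x k)) :
    ¬ CauchySeq x := by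
  intro hc
  obtain ⟨N, hN⟩ := Metric.cauchySeq_iff.mp hc ε hε
  exact (hx (N + 1) N (by omega) |>.trans_lt (hN (N + 1) (by omega) N le_rfl)).false

theorem not_tendsto_comp_of_le_dist (hε : 0 < ε)
    (hx : ∀ m k, m ≠ k → ε ≤ dist (x m) (x k)) {φ : ℕ → ℕ} (hφ : StrictMono φ) (y : X) :
    ¬ Tendsto (x ∘ φ) atTop (𝓝 y) := fun h =>
  not_cauchySeq_of_le_dist hε (fun m k hmk => hx (φ m) (φ k) (hφ.injective.ne hmk)) h.cauchySeq

theorem not_isCompact_closure_of_le_dist {s : Set X} (hs : ∀ m, x m ∈ s) (hε : 0 < ε)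
    (hx : ∀ m k, m ≠ k → ε ≤ dist (x m) (x k)) : ¬ IsCompact (closure s) := fun hc =>
  let ⟨y, _, _, hφ, hy⟩ := hc.tendsto_subseq fun m => subset_closure (hs m)
  not_tendsto_comp_of_le_dist hε hx hφ y hy

end Separated

section Interlaced

variable {α : Type*} [Preorder α] {a b : ℕ → α}

theorem strictMono_left_of_interlaced (hab : ∀ n, a n < b n) (hba : ∀ n, b n < a (n + 1)) :
    StrictMono a :=
  strictMono_nat_of_lt_succ fun n => (hab n).trans (hba n)

theorem strictMono_right_of_interlaced (hab : ∀ n, a n < b n) (hba : ∀ n, b n < a (n + 1)) :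
    StrictMono b :=
  strictMono_nat_of_lt_succ fun n => (hba n).trans (hab (n + 1))

end Interlaced

theorem ZeroAtInftyContinuousMap.dist_apply_le_dist {α β : Type*} [TopologicalSpace α]
    [PseudoMetricSpace β] [Zero β] (f g : C₀(α, β)) (t : α) : dist (f t) (g t) ≤ dist f g :=
  (BoundedContinuousFunction.dist_coe_le_dist (f := f.toBCF) (g := g.toBCF) t).trans_eq
    dist_toBCF_eq_dist

theorem volume_Icc_inter_Icc_div_of_le {u v p q : ℝ} (hup : u ≤ p) (hpq : p < q) (hqv : q ≤ v) :
    (volume (Icc u v ∩ Icc p q)).toReal / (2 * (q - p)) = 1 / 2 := by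
  rw [inter_eq_right.mpr (Icc_subset_Icc hup hqv), Real.volume_Icc,
    ENNReal.toReal_ofReal (sub_nonneg.mpr hpq.le)]
  field_simp [sub_ne_zero.mpr hpq.ne']

theorem volume_Icc_inter_Icc_div_of_lt {u v p q : ℝ} (hvp : v < p) :
    (volume (Icc u v ∩ Icc p q)).toReal / (2 * (q - p)) = 0 := by
  rw [Icc_inter_Icc, Icc_eq_empty (fun h => (h.trans (min_le_left v q)).not_gt
    (hvp.trans_le (le_max_right u p))), measure_empty, ENNReal.toReal_zero, zero_div]

theorem apply_primitive_Icc_zero_b (a b : ℕ → ℝ)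
    (ha0 : a 0 = 0) (hab : ∀ n, a n < b n) (hba : ∀ n, b n < a (n + 1))
    (F : ℝ → ℝ → C₀(ℕ, ℝ))
    (hF : ∀ u v n, F u v n =
      (volume (Set.Icc u v ∩ Set.Icc (a (2 * n)) (b (2 * n)))).toReal /
          (2 * (b (2 * n) - a (2 * n))) -
        (volume (Set.Icc u v ∩ Set.Icc (a (2 * n + 1)) (b (2 * n + 1)))).toReal /
          (2 * (b (2 * n + 1) - a (2 * n + 1))))
    (m n : ℕ) : F 0 (b (2 * m)) n = if n = m then 1 / 2 else 0 := by
  have hamono := strictMono_left_of_interlaced hab hba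
  have hbmono := strictMono_right_of_interlaced hab hba
  have inside (k : ℕ) (hk : k ≤ 2 * m) :
      (volume (Icc 0 (b (2 * m)) ∩ Icc (a k) (b k))).toReal / (2 * (b k - a k)) = 1 / 2 :=
    volume_Icc_inter_Icc_div_of_le (ha0 ▸ hamono.monotone k.zero_le) (hab k)
      (hbmono.monotone hk)
  have outside (k : ℕ) (hk : 2 * m < k) :
      (volume (Icc 0 (b (2 * m)) ∩ Icc (a k) (b k))).toReal / (2 * (b k - a k)) = 0 :=
    volume_Icc_inter_Icc_div_of_lt ((hba _).trans_le (hamono.monotone hk))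
  rw [hF]
  rcases lt_trichotomy n m with h | rfl | h
  · rw [if_neg h.ne, inside _ (by omega), inside _ (by omega), sub_self]
  · rw [if_pos rfl, inside _ le_rfl, outside _ (by omega), sub_zero]
  · rw [if_neg h.ne', outside _ (by omega), outside _ (by omega), sub_zero]

theorem stmt9 (a b : ℕ → ℝ)
    (ha0 : a 0 = 0) (hab : ∀ n, a n < b n) (hba : ∀ n, b n < a (n + 1))
    (hb1 : Tendsto b atTop (𝓝 (1:ℝ)))
    (F : ℝ → ℝ → C₀(ℕ, ℝ))
    (hF : ∀ u v n, F u v n =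
      (volume (Set.Icc u v ∩ Set.Icc (a (2 * n)) (b (2 * n)))).toReal /
          (2 * (b (2 * n) - a (2 * n))) -
        (volume (Set.Icc u v ∩ Set.Icc (a (2 * n + 1)) (b (2 * n + 1)))).toReal /
          (2 * (b (2 * n + 1) - a (2 * n + 1)))) :
    ¬ IsCompact (closure {w : C₀(ℕ, ℝ) | ∃ u v : ℝ, 0 ≤ u ∧ u ≤ v ∧ v ≤ 1 ∧ w = F u v}) ∧
    ∀ φ : ℕ → ℕ, StrictMono φ →
      ¬ ∃ x : C₀(ℕ, ℝ), Tendsto (fun m => F 0 (b (2 * φ m))) atTop (𝓝 x) := by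
  have hF0 := apply_primitive_Icc_zero_b a b ha0 hab hba F hF
  have hsep (m k : ℕ) (hmk : m ≠ k) : 1 / 2 ≤ dist (F 0 (b (2 * m))) (F 0 (b (2 * k))) := by
    refine le_of_eq_of_le ?_ ((F 0 (b (2 * m))).dist_apply_le_dist _ m)
    rw [hF0, hF0, if_pos rfl, if_neg hmk, Real.dist_eq]
    norm_num
  have hbmono := strictMono_right_of_interlaced hab hba
  have hb_nonneg (m : ℕ) : 0 ≤ b m :=
    ha0 ▸ (strictMono_left_of_interlaced hab hba).monotone m.zero_le |>.trans (hab m).le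
  refine ⟨not_isCompact_closure_of_le_dist (fun m => ⟨0, b (2 * m), le_rfl, hb_nonneg _,
      hbmono.monotone.ge_of_tendsto hb1 _, rfl⟩) one_half_pos hsep, ?_⟩
  rintro φ hφ ⟨x, hx⟩
  exact not_tendsto_comp_of_le_dist one_half_pos hsep hφ x hx
end
end

section
/- Let X be a Banach space, Γ : [0,1] → cwk(X) a Henstock–Kurzweil–Pettis integrable multifunction with primitive Φ, and f : [0,1] → X a Henstock–Kurzweil–Pettis integrable selection of Γ with primitive φ. Then φ(I) ∈ Φ(I) for every closed subinterval I ⊆ [0,1]. -/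
/-!
For every functional `x'`, the selection gives `x' (f s) ≤ sSup (x' '' Γ s)` pointwise (a genuine
supremum, since the weakly compact set `Γ s` has bounded image under `x'`). The Henstock–Kurzweil
integral is monotone, by comparing Riemann sums over one partition fine for both gauges, which
exists by Cousin's lemma; hence `x' (φ I) ≤ sSup (x' '' Φ I)`. As `Φ I` is convex and,
being weakly compact, norm closed, Hahn–Banach separation forces `φ I ∈ Φ I`.
-/

open MeasureTheory Set Filter
open scoped Topology ENNReal

noncomputable section

/-- `S` is a nonempty convex weakly compact subset of `X`. -/
def IsCWK {X : Type*} [NormedAddCommGroup X] [NormedSpace ℝ X] (S : Set X) : Prop :=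
  S.Nonempty ∧ Convex ℝ S ∧ IsCompact ((toWeakSpace ℝ X) '' S)

/-- `y` is the Henstock–Kurzweil integral of `g` over `[u,v]`. -/
def HKIntegralOn (g : ℝ → ℝ) (u v : ℝ) (y : ℝ) : Prop :=
  ∀ ε > (0:ℝ), ∃ δ : ℝ → ℝ, (∀ x, 0 < δ x) ∧
    ∀ (n : ℕ) (c t : ℕ → ℝ), c 0 = u → c n = v →
      (∀ i < n, c i ≤ c (i + 1)) →
      (∀ i < n, t i ∈ Set.Icc (c i) (c (i + 1))) →
      (∀ i < n, Set.Icc (c i) (c (i + 1)) ⊆ Set.Ioo (t i - δ (t i)) (t i + δ (t i))) →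
      |(∑ i ∈ Finset.range n, (c (i + 1) - c i) * g (t i)) - y| < ε

structure IsFineTaggedPartition (δ : ℝ → ℝ) (u v : ℝ) (n : ℕ) (c t : ℕ → ℝ) : Prop where
  first : c 0 = u
  last : c n = v
  le_succ : ∀ i < n, c i ≤ c (i + 1)
  tag_mem : ∀ i < n, t i ∈ Icc (c i) (c (i + 1))
  fine : ∀ i < n, Icc (c i) (c (i + 1)) ⊆ Ioo (t i - δ (t i)) (t i + δ (t i))

namespace IsFineTaggedPartition

variable {δ : ℝ → ℝ} {u v : ℝ} {n : ℕ} {c t : ℕ → ℝ}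

theorem refl (δ : ℝ → ℝ) (u : ℝ) : IsFineTaggedPartition δ u u 0 (fun _ => u) (fun _ => u) :=
  ⟨rfl, rfl, by simp, by simp, by simp⟩

theorem mono_gauge {δ' : ℝ → ℝ} (p : IsFineTaggedPartition δ u v n c t) (hδ : ∀ x, δ x ≤ δ' x) :
    IsFineTaggedPartition δ' u v n c t where
  __ := p
  fine i hi := (p.fine i hi).trans <|
    Ioo_subset_Ioo (by linarith [hδ (t i)]) (by linarith [hδ (t i)])

theorem mem_Icc (p : IsFineTaggedPartition δ u v n c t) {i : ℕ} (hi : i ≤ n) :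
    c i ∈ Icc u v := by
  have hmono : MonotoneOn c (Iic n) := monotoneOn_of_le_succ ordConnected_Iic
    fun a _ _ ha => by simpa using p.le_succ a (Nat.succ_le_iff.mp ha)
  rw [← p.first, ← p.last]
  exact ⟨hmono (Nat.zero_le n) hi (Nat.zero_le i), hmono hi (le_refl n) hi⟩

theorem tag_mem_Icc (p : IsFineTaggedPartition δ u v n c t) {i : ℕ} (hi : i < n) :
    t i ∈ Icc u v :=
  ⟨(p.mem_Icc hi.le).1.trans (p.tag_mem i hi).1, (p.tag_mem i hi).2.trans (p.mem_Icc hi).2⟩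

theorem snoc (p : IsFineTaggedPartition δ u v n c t) {w τ : ℝ} (hvw : v ≤ w)
    (hτ : τ ∈ Icc v w) (hfine : Icc v w ⊆ Ioo (τ - δ τ) (τ + δ τ)) :
    IsFineTaggedPartition δ u w (n + 1) (fun i => if i ≤ n then c i else w)
      (fun i => if i < n then t i else τ) := by
  refine ⟨by simp [p.first], by simp, fun i hi => ?_, fun i hi => ?_, fun i hi => ?_⟩ <;>
  rcases Nat.lt_succ_iff_lt_or_eq.mp hi with hi | rfl
  · simpa [hi.le, Nat.succ_le_of_lt hi] using p.le_succ i hi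
  · simpa [p.last] using hvw
  · simpa [hi, hi.le, Nat.succ_le_of_lt hi] using p.tag_mem i hi
  · simpa [p.last] using hτ
  · simpa [hi, hi.le, Nat.succ_le_of_lt hi] using p.fine i hi
  · simpa [p.last] using hfine

end IsFineTaggedPartition

/-- Cousin's lemma: every positive gauge admits a fine tagged partition. -/
theorem exists_isFineTaggedPartition {δ : ℝ → ℝ} (hδ : ∀ x, 0 < δ x) {u v : ℝ} (huv : u ≤ v) :
    ∃ n c t, IsFineTaggedPartition δ u v n c t := by
  set S := {x ∈ Icc u v | ∃ n c t, IsFineTaggedPartition δ u x n c t}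
  -- One interval tagged at `s` extends any partition ending within `δ s` left of `s`; applied
  -- at `s = sSup S`, this shows that `s ∈ S` and that `s < v` is impossible.
  have extend : ∀ x ∈ S, ∀ s w, x ≤ s → s - δ s < x → s ≤ w → w < s + δ s → w ≤ v → w ∈ S := by
    rintro x ⟨hx, n, c, t, p⟩ s w hxs hsx hsw hws hwv
    exact ⟨⟨hx.1.trans (hxs.trans hsw), hwv⟩, _, _, _, p.snoc (hxs.trans hsw) ⟨hxs, hsw⟩
      fun y hy => ⟨by linarith [hy.1], by linarith [hy.2]⟩⟩
  have hne : S.Nonempty := ⟨u, ⟨le_refl u, huv⟩, 0, _, _, .refl δ u⟩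
  have hbdd : BddAbove S := ⟨v, fun x hx => hx.1.2⟩
  set s := sSup S
  have hδs := hδ s
  obtain ⟨x, hxS, hsx⟩ := exists_lt_of_lt_csSup hne (sub_lt_self s hδs)
  have hxs : x ≤ s := le_csSup hbdd hxS
  rcases (csSup_le hne fun x hx => hx.1.2 : s ≤ v).eq_or_lt with hsv | hsv
  · exact (extend x hxS s v hxs hsx hsv.le (by linarith) le_rfl).2
  · have hw : min v (s + δ s / 2) ∈ S := extend x hxS s _ hxs hsx
      (le_min hsv.le (by linarith)) (by linarith [min_le_right v (s + δ s / 2)]) (min_le_left _ _)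
    exact absurd (le_csSup hbdd hw) (not_le.mpr (lt_min hsv (by linarith)))

theorem HKIntegralOn.le_of_le {g h : ℝ → ℝ} {u v y z : ℝ} (huv : u ≤ v)
    (hg : HKIntegralOn g u v y) (hh : HKIntegralOn h u v z) (hle : ∀ s ∈ Icc u v, g s ≤ h s) :
    y ≤ z := by
  refine le_of_forall_pos_lt_add fun ε hε => ?_
  obtain ⟨δ₁, hδ₁, Hg⟩ := hg (ε / 2) (half_pos hε)
  obtain ⟨δ₂, hδ₂, Hh⟩ := hh (ε / 2) (half_pos hε)
  obtain ⟨n, c, t, p⟩ := exists_isFineTaggedPartition (fun x => lt_min (hδ₁ x) (hδ₂ x)) huv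
  have p₁ := p.mono_gauge fun x => min_le_left (δ₁ x) (δ₂ x)
  have p₂ := p.mono_gauge fun x => min_le_right (δ₁ x) (δ₂ x)
  have hg_sum := abs_lt.mp (Hg n c t p₁.first p₁.last p₁.le_succ p₁.tag_mem p₁.fine)
  have hh_sum := abs_lt.mp (Hh n c t p₂.first p₂.last p₂.le_succ p₂.tag_mem p₂.fine)
  have hsum : ∑ i ∈ Finset.range n, (c (i + 1) - c i) * g (t i) ≤
      ∑ i ∈ Finset.range n, (c (i + 1) - c i) * h (t i) :=
    Finset.sum_le_sum fun i hi => mul_le_mul_of_nonneg_left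
      (hle _ (p.tag_mem_Icc (Finset.mem_range.mp hi)))
      (sub_nonneg.mpr (p.le_succ i (Finset.mem_range.mp hi)))
  linarith [hg_sum.1, hh_sum.2]

section WeakTopology

variable {X : Type*} [NormedAddCommGroup X] [NormedSpace ℝ X] {S : Set X}

theorem bddAbove_image_of_isCompact_weak (hS : IsCompact (toWeakSpace ℝ X '' S))
    (x' : X →L[ℝ] ℝ) : BddAbove (x' '' S) := by
  have : x' '' S = (fun w => x' ((toWeakSpace ℝ X).symm w)) '' (toWeakSpace ℝ X '' S) := by
    rw [image_image]; simp
  rw [this]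
  exact (hS.image (WeakBilin.eval_continuous _ x')).bddAbove

theorem isClosed_of_isCompact_weak (hS : IsCompact (toWeakSpace ℝ X '' S)) : IsClosed S := by
  have : IsClosed (toWeakSpace ℝ X ⁻¹' (toWeakSpace ℝ X '' S)) :=
    hS.isClosed.preimage (toWeakSpaceCLM ℝ X).continuous
  rwa [preimage_image_eq _ (toWeakSpace ℝ X).injective] at this

theorem Convex.mem_of_forall_le_sSup_image (hconv : Convex ℝ S) (hclosed : IsClosed S)
    (hne : S.Nonempty) {x : X} (hx : ∀ x' : X →L[ℝ] ℝ, x' x ≤ sSup (x' '' S)) : x ∈ S := by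
  by_contra hxS
  obtain ⟨x', a, hS, hax⟩ := geometric_hahn_banach_closed_point hconv hclosed hxS
  have := csSup_le (hne.image x') (forall_mem_image.2 fun y hy => (hS y hy).le)
  linarith [hx x']

namespace IsCWK

theorem le_sSup_image (hS : IsCWK S) {x : X} (hx : x ∈ S) (x' : X →L[ℝ] ℝ) :
    x' x ≤ sSup (x' '' S) :=
  le_csSup (bddAbove_image_of_isCompact_weak hS.2.2 x') (mem_image_of_mem x' hx)

theorem mem_of_forall_le_sSup_image (hS : IsCWK S) {x : X}
    (hx : ∀ x' : X →L[ℝ] ℝ, x' x ≤ sSup (x' '' S)) : x ∈ S :=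
  hS.2.1.mem_of_forall_le_sSup_image (isClosed_of_isCompact_weak hS.2.2) hS.1 hx

end IsCWK

end WeakTopology

theorem stmt10_general {X : Type*} [NormedAddCommGroup X] [NormedSpace ℝ X]
    (Γ : ℝ → Set X) (Φ : ℝ → ℝ → Set X) (f : ℝ → X) (φ : ℝ → ℝ → X)
    (hΓ : ∀ t ∈ Set.Icc (0:ℝ) 1, IsCWK (Γ t))
    (hΦ : ∀ u v : ℝ, 0 ≤ u → u ≤ v → v ≤ 1 → IsCWK (Φ u v))
    (hHKP : ∀ (x' : X →L[ℝ] ℝ) (u v : ℝ), 0 ≤ u → u ≤ v → v ≤ 1 →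
      HKIntegralOn (fun s => sSup (x' '' Γ s)) u v (sSup (x' '' Φ u v)))
    (hsel : ∀ t ∈ Set.Icc (0:ℝ) 1, f t ∈ Γ t)
    (hf : ∀ (x' : X →L[ℝ] ℝ) (u v : ℝ), 0 ≤ u → u ≤ v → v ≤ 1 →
      HKIntegralOn (fun s => x' (f s)) u v (x' (φ u v))) :
    ∀ u v : ℝ, 0 ≤ u → u ≤ v → v ≤ 1 → φ u v ∈ Φ u v := by
  intro u v hu huv hv
  have hsub : ∀ s ∈ Icc u v, s ∈ Icc (0:ℝ) 1 := fun s hs => ⟨hu.trans hs.1, hs.2.trans hv⟩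
  refine (hΦ u v hu huv hv).mem_of_forall_le_sSup_image fun x' => ?_
  exact (hf x' u v hu huv hv).le_of_le huv (hHKP x' u v hu huv hv) fun s hs =>
    (hΓ s (hsub s hs)).le_sSup_image (hsel s (hsub s hs)) x'

theorem stmt10 {X : Type*} [NormedAddCommGroup X] [NormedSpace ℝ X] [CompleteSpace X]
    (Γ : ℝ → Set X) (Φ : ℝ → ℝ → Set X) (f : ℝ → X) (φ : ℝ → ℝ → X)
    (hΓ : ∀ t ∈ Set.Icc (0:ℝ) 1, IsCWK (Γ t))
    (hΦ : ∀ u v : ℝ, 0 ≤ u → u ≤ v → v ≤ 1 → IsCWK (Φ u v))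
    (hHKP : ∀ (x' : X →L[ℝ] ℝ) (u v : ℝ), 0 ≤ u → u ≤ v → v ≤ 1 →
      HKIntegralOn (fun s => sSup (x' '' Γ s)) u v (sSup (x' '' Φ u v)))
    (hsel : ∀ t ∈ Set.Icc (0:ℝ) 1, f t ∈ Γ t)
    (hf : ∀ (x' : X →L[ℝ] ℝ) (u v : ℝ), 0 ≤ u → u ≤ v → v ≤ 1 →
      HKIntegralOn (fun s => x' (f s)) u v (x' (φ u v))) :
    ∀ u v : ℝ, 0 ≤ u → u ≤ v → v ≤ 1 → φ u v ∈ Φ u v :=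
  stmt10_general Γ Φ f φ hΓ hΦ hHKP hsel hf
end
end
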